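/- Total decomposition of unit uncertainty: for n inputs, β^k_1 + β^k_{2|1} + β^k_{3|(1,2)} + ... + β^k_{n|(1,...,n−1)} = β^k_{(1,...,n)} = 1, assuming the output is a deterministic function of all inputs. This holds for any ordering of learning the input variables. -/

import Mathlib

/-!
On `L²`, conditioning on a σ-algebra is the orthogonal projection onto its measurable functions.
Along an increasing chain of σ-algebras each increment `E[Z | Mⱼ₊₁] - E[Z | Mⱼ]` is therefore
orthogonal to everything `Mⱼ`-measurable, in particular to `E[Z | Mⱼ] - E[Z | M₀]`, and Pythagoras
telescopes the squared increments to `‖E[Z | Mₙ] - E[Z | M₀]‖²`. Learning the inputs in the order `π`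
is such a chain, from `⊥` (where `E[Z | ⊥] = E Z`) to `⨆ i, m i` (where `E[Z | ⨆ i, m i] = Z`), so
the sum of the conditional indices is the normalized variance of `Z`, which is `1`.
-/

open MeasureTheory Finset
open scoped RealInnerProductSpace

theorem sum_range_norm_sub_sq_of_inner_eq_zero {E : Type*} [NormedAddCommGroup E]
    [InnerProductSpace ℝ E] (P : ℕ → E) (horth : ∀ N, ⟪P (N + 1) - P N, P N - P 0⟫ = 0) (N : ℕ) :
    ∑ j ∈ range N, ‖P (j + 1) - P j‖ ^ 2 = ‖P N - P 0‖ ^ 2 := by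
  induction N with
  | zero => simp
  | succ N ih =>
    rw [sum_range_succ, ih, show P (N + 1) - P 0 = (P (N + 1) - P N) + (P N - P 0) by abel,
      norm_add_sq_real, horth N]
    ring

namespace MeasureTheory

variable {α E : Type*} {m₀ : MeasurableSpace α} {μ : Measure α}
  [NormedAddCommGroup E] [InnerProductSpace ℝ E]

theorem L2.integral_norm_sq (f : α →₂[μ] E) : ∫ a, ‖f a‖ ^ 2 ∂μ = ‖f‖ ^ 2 := by
  simp_rw [← real_inner_self_eq_norm_sq, L2.inner_def]

variable [CompleteSpace E]

theorem integral_norm_sub_integral_sq [IsProbabilityMeasure μ] {f : α → E} (hf : MemLp f 2 μ) :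
    ∫ a, ‖f a - ∫ b, f b ∂μ‖ ^ 2 ∂μ = ∫ a, ‖f a‖ ^ 2 ∂μ - ‖∫ b, f b ∂μ‖ ^ 2 := by
  set c := ∫ b, f b ∂μ
  have hf1 : Integrable f μ := hf.integrable one_le_two
  have hf2 : Integrable (fun a => ‖f a‖ ^ 2) μ := hf.integrable_norm_pow two_ne_zero
  have hinner : Integrable (fun a => 2 * ⟪c, f a⟫) μ := (hf1.const_inner c).const_mul 2
  have hdiff : Integrable (fun a => ‖f a‖ ^ 2 - 2 * ⟪c, f a⟫) μ := hf2.sub hinner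
  calc ∫ a, ‖f a - c‖ ^ 2 ∂μ
      = ∫ a, (‖f a‖ ^ 2 - 2 * ⟪c, f a⟫ + ‖c‖ ^ 2) ∂μ := by
        simp_rw [norm_sub_sq_real, real_inner_comm c]
    _ = ∫ a, ‖f a‖ ^ 2 ∂μ - 2 * ⟪c, c⟫ + ‖c‖ ^ 2 := by
        rw [integral_add hdiff (integrable_const _), integral_sub hf2 hinner,
          integral_const_mul, integral_inner hf1, integral_const, probReal_univ, one_smul]
    _ = ∫ a, ‖f a‖ ^ 2 ∂μ - ‖c‖ ^ 2 := by
        rw [real_inner_self_eq_norm_sq]; ring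

theorem inner_condExpL2_sub_condExpL2_eq_zero {m₁ m₂ : MeasurableSpace α} (h₁₂ : m₁ ≤ m₂)
    (h₂ : m₂ ≤ m₀) (f g : α →₂[μ] E) (hg : AEStronglyMeasurable[m₁] g μ) :
    ⟪(condExpL2 E ℝ h₂ f : α →₂[μ] E) - condExpL2 E ℝ (h₁₂.trans h₂) f, g⟫ = 0 := by
  rw [inner_sub_left, inner_condExpL2_eq_inner_fun h₂ f g (hg.mono h₁₂),
    inner_condExpL2_eq_inner_fun _ f g hg, sub_self]

theorem sum_integral_norm_condExp_sub_sq [IsFiniteMeasure μ] {M : ℕ → MeasurableSpace α}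
    (hM : Monotone M) (hle : ∀ j, M j ≤ m₀) {f : α → E} (hf : MemLp f 2 μ) (N : ℕ) :
    ∑ j ∈ range N, ∫ a, ‖μ[f | M (j + 1)] a - μ[f | M j] a‖ ^ 2 ∂μ
      = ∫ a, ‖μ[f | M N] a - μ[f | M 0] a‖ ^ 2 ∂μ := by
  set P : ℕ → α →₂[μ] E := fun j => condExpL2 E ℝ (hle j) hf.toLp
  have hP : ∀ j, AEStronglyMeasurable[M j] (P j) μ := fun j =>
    aestronglyMeasurable_condExpL2 (hle j) _
  have hnorm : ∀ i j, ∫ a, ‖μ[f | M i] a - μ[f | M j] a‖ ^ 2 ∂μ = ‖P i - P j‖ ^ 2 := by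
    intro i j
    rw [← L2.integral_norm_sq]
    refine integral_congr_ae ?_
    filter_upwards [Lp.coeFn_sub (P i) (P j), hf.condExpL2_ae_eq_condExp (𝕜 := ℝ) (hle i),
      hf.condExpL2_ae_eq_condExp (𝕜 := ℝ) (hle j)] with a hsub hi hj
    rw [hsub, Pi.sub_apply, hi, hj]
  have horth : ∀ N, ⟪P (N + 1) - P N, P N - P 0⟫ = 0 := fun N =>
    inner_condExpL2_sub_condExpL2_eq_zero (hM N.le_succ) (hle _) _ _
      (((hP N).sub ((hP 0).mono (hM N.zero_le))).congr (Lp.coeFn_sub _ _).symm)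
  simp_rw [hnorm]
  exact sum_range_norm_sub_sq_of_inner_eq_zero P horth N

end MeasureTheory

theorem total_decomposition_unit_uncertainty_general
    {Ω H : Type*} [m0 : MeasurableSpace Ω]
    [NormedAddCommGroup H] [InnerProductSpace ℝ H] [CompleteSpace H]
    (μ : Measure Ω) [IsProbabilityMeasure μ]
    (n : ℕ) (m : Fin n → MeasurableSpace Ω) (hm : ∀ i, m i ≤ m0)
    (Z : Ω → H)
    (hZ2 : Integrable (fun ω => ‖Z ω‖ ^ 2) μ)
    (hdet : StronglyMeasurable[⨆ i, m i] Z)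
    (hden : 0 < (∫ ω, ‖Z ω‖ ^ 2 ∂μ) - ‖∫ ω', Z ω' ∂μ‖ ^ 2)
    (π : Equiv.Perm (Fin n)) :
    (∑ j ∈ Finset.range n,
        (∫ ω, ‖(μ[Z| ⨆ (i : Fin n) (_ : (π.symm i : ℕ) < j + 1), m i]) ω
              - (μ[Z| ⨆ (i : Fin n) (_ : (π.symm i : ℕ) < j), m i]) ω‖ ^ 2 ∂μ) /
          ((∫ ω, ‖Z ω‖ ^ 2 ∂μ) - ‖∫ ω', Z ω' ∂μ‖ ^ 2))
      = (∫ ω, ‖(μ[Z| ⨆ i, m i]) ω - ∫ ω', Z ω' ∂μ‖ ^ 2 ∂μ) /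
          ((∫ ω, ‖Z ω‖ ^ 2 ∂μ) - ‖∫ ω', Z ω' ∂μ‖ ^ 2) ∧
    (∫ ω, ‖(μ[Z| ⨆ i, m i]) ω - ∫ ω', Z ω' ∂μ‖ ^ 2 ∂μ) /
        ((∫ ω, ‖Z ω‖ ^ 2 ∂μ) - ‖∫ ω', Z ω' ∂μ‖ ^ 2) = 1 := by
  have hsup : (⨆ i, m i) ≤ m0 := iSup_le hm
  have hZ : MemLp Z 2 μ :=
    (memLp_two_iff_integrable_sq_norm (hdet.mono hsup).aestronglyMeasurable).mpr hZ2
  set M : ℕ → MeasurableSpace Ω := fun j => ⨆ (i : Fin n) (_ : (π.symm i : ℕ) < j), m i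
  have hM : Monotone M := fun a b hab => biSup_mono fun i h => h.trans_le hab
  have hle : ∀ j, M j ≤ m0 := fun j => iSup₂_le fun i _ => hm i
  have hM0 : M 0 = ⊥ := by simp [M]
  have hMn : M n = ⨆ i, m i := iSup_congr fun i => iSup_pos (π.symm i).is_lt
  have hvar : ∫ ω, ‖(μ[Z| ⨆ i, m i]) ω - ∫ ω', Z ω' ∂μ‖ ^ 2 ∂μ
      = (∫ ω, ‖Z ω‖ ^ 2 ∂μ) - ‖∫ ω', Z ω' ∂μ‖ ^ 2 := by
    rw [condExp_of_stronglyMeasurable hsup hdet (hZ.integrable one_le_two),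
      integral_norm_sub_integral_sq hZ]
  refine ⟨?_, by rw [hvar, div_self hden.ne']⟩
  rw [← sum_div, sum_integral_norm_condExp_sub_sq hM hle hZ n, hMn, hM0, condExp_bot]

/-- **Total decomposition of unit uncertainty along any learning sequence.**
Work on a probability space `(Ω, m0, μ)`.  The inputs `X₁,…,Xₙ` generate the
σ-algebras `m i ≤ m0`, and the output feature map is `Z ω = k(·, Y(ω))`; the output
is a deterministic function of all inputs, i.e. `Z` is strongly measurable with
respect to `⨆ i, m i`.  For an arbitrary ordering `π` of the inputs (`π j` is the
input learned at step `j`), the set of inputs learned before step `j` is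
`{i | π.symm i < j}`, and the conditional index at step `j` is the normalized average
squared MMD between the conditional mean embeddings given the first `j+1` and the
first `j` inputs.  (Conditioning on no inputs is conditioning on the trivial
σ-algebra `⊥`, for which the conditional embedding is the unconditional one `μ_Y`.)
Then `β^k_{π(1)} + β^k_{π(2)|π(1)} + ⋯ + β^k_{π(n)|(π(1),…,π(n−1))}
 = β^k_{(1,…,n)} = 1`. -/
theorem total_decomposition_unit_uncertainty
    {Ω H : Type*} [m0 : MeasurableSpace Ω]
    [NormedAddCommGroup H] [InnerProductSpace ℝ H] [CompleteSpace H]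
    (μ : Measure Ω) [IsProbabilityMeasure μ]
    (n : ℕ) (m : Fin n → MeasurableSpace Ω) (hm : ∀ i, m i ≤ m0)
    (Z : Ω → H) (hZ : Integrable Z μ)
    (hZ2 : Integrable (fun ω => ‖Z ω‖ ^ 2) μ)
    (hdet : StronglyMeasurable[⨆ i, m i] Z)
    (hden : 0 < (∫ ω, ‖Z ω‖ ^ 2 ∂μ) - ‖∫ ω', Z ω' ∂μ‖ ^ 2)
    (π : Equiv.Perm (Fin n)) :
    (∑ j ∈ Finset.range n,
        (∫ ω, ‖(μ[Z| ⨆ (i : Fin n) (_ : (π.symm i : ℕ) < j + 1), m i]) ω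
              - (μ[Z| ⨆ (i : Fin n) (_ : (π.symm i : ℕ) < j), m i]) ω‖ ^ 2 ∂μ) /
          ((∫ ω, ‖Z ω‖ ^ 2 ∂μ) - ‖∫ ω', Z ω' ∂μ‖ ^ 2))
      = (∫ ω, ‖(μ[Z| ⨆ i, m i]) ω - ∫ ω', Z ω' ∂μ‖ ^ 2 ∂μ) /
          ((∫ ω, ‖Z ω‖ ^ 2 ∂μ) - ‖∫ ω', Z ω' ∂μ‖ ^ 2) ∧
    (∫ ω, ‖(μ[Z| ⨆ i, m i]) ω - ∫ ω', Z ω' ∂μ‖ ^ 2 ∂μ) /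
        ((∫ ω, ‖Z ω‖ ^ 2 ∂μ) - ‖∫ ω', Z ω' ∂μ‖ ^ 2) = 1 :=
  total_decomposition_unit_uncertainty_general (m0 := m0) μ n m hm Z hZ2 hdet hden π
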